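/- Let m ≥ 1, n ≥ 1 and let i : ℤ/(2m) → {1,…,n} be such that the cardinality of the range of i equals m + 1 and the number of distinct unordered pairs {i(j), i(j+1)} for j ∈ ℤ/(2m) equals m. Then every directed edge of the walk appears together with its reversal: for every j ∈ ℤ/(2m), the number of j' ∈ ℤ/(2m) with (i(j'), i(j'+1)) = (i(j), i(j+1)) equals 1, and the number of j' ∈ ℤ/(2m) with (i(j'), i(j'+1)) = (i(j+1), i(j)) equals 1; in particular i(j) ≠ i(j+1) for all j. -/

import Mathlib

/-!
The steps of the walk span a connected graph on its `m + 1` vertices with at most `m` edges, so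
it is a tree with exactly `m` edges and the walk has no loops. Every edge of a tree is a bridge,
and a closed walk crosses a bridge as often in one direction as in the other: both counts equal
the number of times the walk leaves, resp. enters, the side of the bridge containing its tail.
So each of the `m` edges is traversed at least twice, and since there are only `2m` steps,
exactly once in each direction.
-/

open Finset SimpleGraph

theorem Finset.card_filter_and_not_comp_perm {α : Type*} [Fintype α] (σ : Equiv.Perm α)
    (p : α → Prop) [DecidablePred p] :
    #{x | p x ∧ ¬p (σ x)} = #{x | ¬p x ∧ p (σ x)} := by
  have hσ : #{x | p (σ x)} = #{x | p x} := card_equiv σ (by simp)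
  have h₁ := card_filter_add_card_filter_not (s := {x | p x}) (fun x => p (σ x))
  have h₂ := card_filter_add_card_filter_not (s := {x | p (σ x)}) p
  simp only [filter_filter, and_comm (a := p (σ _))] at h₁ h₂
  omega

theorem Finset.card_filter_sym2_eq {ι α : Type*} [Fintype ι] [DecidableEq α]
    (u v : ι → α) {a b : α} (hab : a ≠ b) :
    #{x | s(u x, v x) = s(a, b)} = #{x | (u x, v x) = (a, b)} + #{x | (u x, v x) = (b, a)} := by
  classical
  simp only [Sym2.eq_iff, ← Prod.mk.injEq]
  rw [filter_or, card_union_of_disjoint]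
  exact disjoint_filter.2 fun x _ h₁ h₂ => hab (by grind)

theorem Finset.card_fiber_eq_of_le_of_card_eq_mul {ι β : Type*} [Fintype ι] [DecidableEq β]
    {f : ι → β} {k : ℕ} (hk : ∀ x, k ≤ #{y | f y = f x})
    (hcard : Fintype.card ι = k * #(univ.image f)) (x : ι) : #{y | f y = f x} = k := by
  have hsum : ∑ _ ∈ univ.image f, k = ∑ b ∈ univ.image f, #{y | f y = b} := by
    rw [sum_const, smul_eq_mul, mul_comm, ← hcard, ← card_univ, card_eq_sum_card_image f]
  have hle : ∀ b ∈ univ.image f, k ≤ #{y | f y = b} := by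
    simp only [mem_image, mem_univ, true_and, forall_exists_index, forall_apply_eq_imp_iff]
    exact hk
  exact ((sum_eq_sum_iff_of_le hle).1 hsum (f x) (mem_image_of_mem f (mem_univ x))).symm

theorem Set.ncard_range_eq_card_image {ι α : Type*} [Fintype ι] [DecidableEq α] (f : ι → α) :
    (Set.range f).ncard = #(Finset.univ.image f) := by
  rw [← Set.ncard_coe_finset, coe_image, coe_univ, Set.image_univ]

namespace SimpleGraph

variable {V : Type*} {N : ℕ}

def cyclicWalkGraph (w : ZMod N → V) : SimpleGraph V :=
  fromEdgeSet (Set.range fun j => s(w j, w (j + 1)))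

theorem eq_or_adj_cyclicWalkGraph (w : ZMod N → V) (j : ZMod N) :
    w j = w (j + 1) ∨ (cyclicWalkGraph w).Adj (w j) (w (j + 1)) :=
  or_iff_not_imp_left.2 fun h => (fromEdgeSet_adj _).2 ⟨⟨j, rfl⟩, h⟩

theorem reachable_of_forall_reachable_succ [NeZero N] {G : SimpleGraph V} {w : ZMod N → V}
    (hw : ∀ j, G.Reachable (w j) (w (j + 1))) (j j' : ZMod N) : G.Reachable (w j) (w j') := by
  have h : ∀ k : ℕ, G.Reachable (w j) (w (j + k)) := by
    intro k
    induction k with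
    | zero => simp
    | succ k ih => simpa [add_assoc] using ih.trans (hw (j + k))
  simpa using h (j' - j).val

theorem cyclicWalkGraph_connected [NeZero N] {w : ZMod N → V} (hw : Function.Surjective w) :
    (cyclicWalkGraph w).Connected := by
  have hsucc (j : ZMod N) : (cyclicWalkGraph w).Reachable (w j) (w (j + 1)) :=
    (eq_or_adj_cyclicWalkGraph w j).elim (fun h => h ▸ Reachable.refl _) Adj.reachable
  refine (connected_iff _).2 ⟨fun u v => ?_, ⟨w 0⟩⟩
  obtain ⟨j, rfl⟩ := hw u
  obtain ⟨j', rfl⟩ := hw v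
  exact reachable_of_forall_reachable_succ hsucc j j'

section card

variable [Fintype V] [DecidableEq V] [NeZero N] {w : ZMod N → V}

theorem edgeSet_cyclicWalkGraph_of_card (hw : Function.Surjective w)
    (hcard : Fintype.card V = #(univ.image fun j => s(w j, w (j + 1))) + 1) :
    (cyclicWalkGraph w).edgeSet = Set.range fun j => s(w j, w (j + 1)) := by
  have hconn := (cyclicWalkGraph_connected hw).card_vert_le_card_edgeSet_add_one
  rw [Nat.card_eq_fintype_card, hcard, ← Set.ncard_range_eq_card_image, Nat.card_coe_set_eq]
    at hconn
  rw [cyclicWalkGraph, edgeSet_fromEdgeSet] at hconn ⊢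
  exact Set.eq_of_subset_of_ncard_le Set.sdiff_subset (by omega) (Set.toFinite _)

theorem ne_succ_of_card (hw : Function.Surjective w)
    (hcard : Fintype.card V = #(univ.image fun j => s(w j, w (j + 1))) + 1) (j : ZMod N) :
    w j ≠ w (j + 1) := by
  have h : s(w j, w (j + 1)) ∈ (cyclicWalkGraph w).edgeSet := by
    rw [edgeSet_cyclicWalkGraph_of_card hw hcard]
    exact ⟨j, rfl⟩
  exact (cyclicWalkGraph w).ne_of_adj h

theorem isTree_cyclicWalkGraph_of_card (hw : Function.Surjective w)
    (hcard : Fintype.card V = #(univ.image fun j => s(w j, w (j + 1))) + 1) :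
    (cyclicWalkGraph w).IsTree := by
  refine isTree_iff_connected_and_card.2 ⟨cyclicWalkGraph_connected hw, ?_⟩
  rw [Nat.card_coe_set_eq, edgeSet_cyclicWalkGraph_of_card hw hcard, Nat.card_eq_fintype_card,
    hcard, Set.ncard_range_eq_card_image]

end card

theorem IsBridge.reachable_and_not_reachable_iff {G : SimpleGraph V} {a b x y : V}
    (hab : G.IsBridge s(a, b)) (hxy : x = y ∨ G.Adj x y) :
    (G.deleteEdges {s(a, b)}).Reachable a x ∧ ¬(G.deleteEdges {s(a, b)}).Reachable a y ↔
      x = a ∧ y = b := by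
  constructor
  · rintro ⟨hx, hy⟩
    rcases hxy with rfl | hxy
    · exact absurd hx hy
    by_cases he : s(x, y) = s(a, b)
    · rcases Sym2.eq_iff.1 he with h | ⟨rfl, rfl⟩
      · exact h
      · exact absurd hx hab
    · exact absurd (hx.trans (deleteEdges_adj.2 ⟨hxy, by simpa using he⟩).reachable) hy
  · rintro ⟨rfl, rfl⟩
    exact ⟨Reachable.refl _, hab⟩

theorem IsBridge.card_filter_step_eq_swap [NeZero N] [DecidableEq V] {G : SimpleGraph V}
    {w : ZMod N → V} (hw : ∀ j, w j = w (j + 1) ∨ G.Adj (w j) (w (j + 1))) {a b : V}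
    (hab : G.IsBridge s(a, b)) :
    #{j | (w j, w (j + 1)) = (a, b)} = #{j | (w j, w (j + 1)) = (b, a)} := by
  classical
  let side : ZMod N → Prop := fun j => (G.deleteEdges {s(a, b)}).Reachable a (w j)
  have hfwd (j : ZMod N) : (w j, w (j + 1)) = (a, b) ↔ side j ∧ ¬side (j + 1) := by
    rw [Prod.mk.injEq]
    exact (hab.reachable_and_not_reachable_iff (hw j)).symm
  have hbwd (j : ZMod N) : (w j, w (j + 1)) = (b, a) ↔ ¬side j ∧ side (j + 1) := by
    rw [Prod.mk.injEq, and_comm, and_comm (a := ¬side j)]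
    exact (hab.reachable_and_not_reachable_iff ((hw j).imp Eq.symm Adj.symm)).symm
  simp only [hfwd, hbwd]
  exact card_filter_and_not_comp_perm (Equiv.addRight 1) side

end SimpleGraph

open SimpleGraph in
theorem card_filter_step_eq_one_of_card {V : Type*} [Fintype V] [DecidableEq V] {m : ℕ}
    [NeZero (2 * m)] {w : ZMod (2 * m) → V} (hw : Function.Surjective w)
    (hV : Fintype.card V = m + 1) (hE : #(univ.image fun j => s(w j, w (j + 1))) = m)
    (j : ZMod (2 * m)) :
    #{j' | (w j', w (j' + 1)) = (w j, w (j + 1))} = 1 ∧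
      #{j' | (w j', w (j' + 1)) = (w (j + 1), w j)} = 1 ∧ w j ≠ w (j + 1) := by
  have hcard : Fintype.card V = #(univ.image fun j => s(w j, w (j + 1))) + 1 := by omega
  have hne := ne_succ_of_card hw hcard
  have hbal (j : ZMod (2 * m)) :
      #{j' | (w j', w (j' + 1)) = (w j, w (j + 1))} =
        #{j' | (w j', w (j' + 1)) = (w (j + 1), w j)} :=
    (isAcyclic_iff_forall_adj_isBridge.1 (isTree_cyclicWalkGraph_of_card hw hcard).isAcyclic
      ((eq_or_adj_cyclicWalkGraph w j).resolve_left (hne j))).card_filter_step_eq_swap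
      (eq_or_adj_cyclicWalkGraph w)
  have hpos (j : ZMod (2 * m)) : 1 ≤ #{j' | (w j', w (j' + 1)) = (w j, w (j + 1))} :=
    card_pos.2 ⟨j, by simp⟩
  have hfiber (j : ZMod (2 * m)) : #{j' | s(w j', w (j' + 1)) = s(w j, w (j + 1))} =
      2 * #{j' | (w j', w (j' + 1)) = (w j, w (j + 1))} := by
    rw [card_filter_sym2_eq w (fun j => w (j + 1)) (hne j), ← hbal j]
    ring
  have htwo : #{j' | s(w j', w (j' + 1)) = s(w j, w (j + 1))} = 2 :=
    card_fiber_eq_of_le_of_card_eq_mul (fun j => by linarith [hfiber j, hpos j])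
      (by rw [ZMod.card, hE]) j
  have hfwd : #{j' | (w j', w (j' + 1)) = (w j, w (j + 1))} = 1 := by linarith [hfiber j]
  exact ⟨hfwd, hbal j ▸ hfwd, hne j⟩

/-- Let `m, n ≥ 1` and let `i : ℤ/(2m) → {1,…,n}` be a closed walk of double tree type
(range of cardinality `m+1` and exactly `m` distinct unordered pairs `{i(j), i(j+1)}`).
Then every directed edge of the walk appears exactly once together with its reversal
appearing exactly once; in particular `i(j) ≠ i(j+1)` for all `j`. -/
theorem stmt_17 (m n : ℕ) (hm : 1 ≤ m) :
    letI : NeZero (2 * m) := ⟨by omega⟩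
    ∀ i : ZMod (2 * m) → Fin n,
      (Finset.univ.image i).card = m + 1 →
      (Finset.univ.image (fun j : ZMod (2 * m) => s(i j, i (j + 1)))).card = m →
      ∀ j : ZMod (2 * m),
        (Finset.univ.filter
            (fun j' : ZMod (2 * m) => (i j', i (j' + 1)) = (i j, i (j + 1)))).card = 1 ∧
        (Finset.univ.filter
            (fun j' : ZMod (2 * m) => (i j', i (j' + 1)) = (i (j + 1), i j))).card = 1 ∧
        i j ≠ i (j + 1) := by
  intro i hrange hpairs j
  have : NeZero (2 * m) := ⟨by omega⟩
  set w := Set.rangeFactorization i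
  have hstep (a b c d : ZMod (2 * m)) : (i a, i b) = (i c, i d) ↔ (w a, w b) = (w c, w d) := by
    simp [w, Set.rangeFactorization, Subtype.ext_iff]
  have hV : Fintype.card (Set.range i) = m + 1 := by
    rw [← Set.toFinset_card, Set.toFinset_range, hrange]
  have hE : #(univ.image fun j => s(w j, w (j + 1))) = m := by
    rw [← card_image_of_injective _ (Sym2.map.injective Subtype.val_injective), image_image]
    exact hpairs
  simp only [hstep]
  obtain ⟨hfwd, hbwd, hne⟩ :=
    card_filter_step_eq_one_of_card Set.rangeFactorization_surjective hV hE j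
  exact ⟨hfwd, hbwd, fun h => hne (Subtype.ext h)⟩
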